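/- For every natural number n and all integers t and m, 5·∑_{j=1}^n (−F_{m−3})^{n−j}·(F_{m+2})^j·G_{j+t−1}·G_{j+t}·G_{j+t+1}·G_{j+t+2}·G_{j+t+m} = F_{m+2}^{n+1}·G_{n+t+1}^5 − (−F_{m−3})^n·F_{m+2}·G_{t+1}^5 − λ²·(F_{m+2}^{n+1}·G_{n+t+1} − (−F_{m−3})^n·F_{m+2}·G_{t+1}). -/

import Mathlib

/-!
Write `a = F(m+2)`, `b = -F(m-3)`, `λ = G(1)² - G(0)G(2)` and `H(s) = G(s)⁵ - λ² G(s)`.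
Expressing every term through `G(s)`, `G(s+1)`, `F(m)`, `F(m-1)` (addition formula
`G(s+m) = F(m) G(s+1) + F(m-1) G(s)`) and using that Cassini's quantity
`G(s+1)² - G(s) G(s+2)` is `±λ`, the product `5 G(s-1) G(s) G(s+1) G(s+2) G(s+m)` equals
`a H(s+1) - b H(s)`. Weighted by `b^(n-j) a^j`, these terms telescope.
-/

open Finset

def IsGibonacci {R : Type*} [Add R] (G : ℤ → R) : Prop :=
  ∀ k : ℤ, G (k + 2) = G (k + 1) + G k

def cassini {R : Type*} [CommRing R] (G : ℤ → R) (s : ℤ) : R :=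
  G (s + 1) ^ 2 - G s * G (s + 2)

namespace IsGibonacci

section AddCommGroup

variable {R : Type*} [AddCommGroup R] {G : ℤ → R}

theorem sub_one (hG : IsGibonacci G) (k : ℤ) : G (k - 1) = G (k + 1) - G k := by
  have h := hG (k - 1)
  rw [show k - 1 + 2 = k + 1 by ring, sub_add_cancel] at h
  exact eq_sub_of_add_eq' h.symm

theorem comp_add_left (hG : IsGibonacci G) (c : ℤ) : IsGibonacci fun k => G (c + k) :=
  fun k => by simpa only [add_assoc] using hG (c + k)

theorem comp_sub (hG : IsGibonacci G) (c : ℤ) : IsGibonacci fun k => G (k - c) :=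
  fun k => by simpa only [sub_add_eq_add_sub] using hG (k - c)

theorem ext {G' : ℤ → R} (hG : IsGibonacci G) (hG' : IsGibonacci G') (h₀ : G 0 = G' 0)
    (h₁ : G 1 = G' 1) : G = G' := by
  suffices h : ∀ k : ℤ, G k = G' k ∧ G (k + 1) = G' (k + 1) from funext fun k => (h k).1
  intro k
  induction k using Int.induction_on with
  | zero => exact ⟨h₀, by simpa using h₁⟩
  | succ k ih => exact ⟨ih.2, by rw [add_assoc, one_add_one_eq_two, hG, hG', ih.1, ih.2]⟩
  | pred k ih =>
    rw [sub_add_cancel]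
    exact ⟨by rw [hG.sub_one, hG'.sub_one, ih.1, ih.2], ih.1⟩

end AddCommGroup

variable {R : Type*} [CommRing R] {G : ℤ → R}

theorem mul_add_mul {G' : ℤ → R} (hG : IsGibonacci G) (hG' : IsGibonacci G') (x y : R) :
    IsGibonacci fun k => G k * x + G' k * y :=
  fun k => by simp only [hG k, hG' k]; ring

theorem add_eq {F : ℤ → R} (hF₀ : F 0 = 0) (hF₁ : F 1 = 1) (hF : IsGibonacci F)
    (hG : IsGibonacci G) (k m : ℤ) : G (k + m) = F m * G (k + 1) + F (m - 1) * G k := by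
  have hF_neg_one : F (-1) = 1 := by
    simpa [hF₀, hF₁] using hF.sub_one 0
  refine congrFun (hG.comp_add_left k |>.ext (hF.mul_add_mul (hF.comp_sub 1) _ _) ?_ ?_) m
  · simp [hF₀, hF_neg_one]
  · simp [hF₀, hF₁]

theorem cassini_add_one (hG : IsGibonacci G) (s : ℤ) : cassini G (s + 1) = -cassini G s := by
  simp only [cassini]
  rw [hG (s + 1), show s + 1 + 1 = s + 2 by ring, hG s]
  ring

theorem cassini_sq (hG : IsGibonacci G) (s : ℤ) : cassini G s ^ 2 = cassini G 0 ^ 2 := by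
  induction s using Int.induction_on with
  | zero => rfl
  | succ k ih => rw [hG.cassini_add_one, neg_sq, ih]
  | pred k ih =>
    have h := hG.cassini_add_one (-k - 1)
    rw [sub_add_cancel] at h
    rw [← neg_sq, ← h, ih]

theorem five_mul_prod_eq {F : ℤ → R} (hF₀ : F 0 = 0) (hF₁ : F 1 = 1) (hF : IsGibonacci F)
    (hG : IsGibonacci G) (s m : ℤ) :
    5 * (G (s - 1) * G s * G (s + 1) * G (s + 2) * G (s + m)) =
      F (m + 2) * (G (s + 1) ^ 5 - cassini G s ^ 2 * G (s + 1)) +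
        F (m - 3) * (G s ^ 5 - cassini G s ^ 2 * G s) := by
  have hF_add_two : F (m + 2) = 2 * F m + F (m - 1) := by
    rw [hF m, hF.sub_one m]; ring
  have hF_sub_three : F (m - 3) = 2 * F (m - 1) - F m := by
    have h₁ := hF (m - 3)
    have h₂ := hF (m - 2)
    rw [show m - 3 + 2 = m - 1 by ring, show m - 3 + 1 = m - 2 by ring] at h₁
    rw [show m - 2 + 2 = m by ring, show m - 2 + 1 = m - 1 by ring] at h₂
    linear_combination h₂ - h₁
  simp only [cassini]
  rw [hF_add_two, hF_sub_three, hG.sub_one, hG s, add_eq hF₀ hF₁ hF hG s m]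
  ring

end IsGibonacci

theorem sum_Icc_pow_mul_pow_mul_telescope {R : Type*} [CommRing R] (a b : R) (u v : ℕ → R)
    (hv : ∀ j, v j = a * u (j + 1) - b * u j) (n : ℕ) :
    ∑ j ∈ Icc 1 n, b ^ (n - j) * a ^ j * v j = a ^ (n + 1) * u (n + 1) - b ^ n * a * u 1 := by
  induction n with
  | zero => simp
  | succ n ih =>
    have h_pull_b : ∑ j ∈ Icc 1 n, b ^ (n + 1 - j) * a ^ j * v j =
        b * ∑ j ∈ Icc 1 n, b ^ (n - j) * a ^ j * v j := by
      rw [mul_sum]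
      refine sum_congr rfl fun j hj => ?_
      rw [Nat.sub_add_comm (mem_Icc.mp hj).2, pow_succ]
      ring
    rw [sum_Icc_succ_top (Nat.le_add_left 1 n), h_pull_b, ih, Nat.sub_self, hv]
    ring

theorem weighted_sum_products (F : ℤ → ℤ) (hF0 : F 0 = 0) (hF1 : F 1 = 1)
    (hF : ∀ k : ℤ, F (k + 2) = F (k + 1) + F k)
    (G : ℤ → ℤ) (hG : ∀ k : ℤ, G (k + 2) = G (k + 1) + G k) (n : ℕ) (t m : ℤ) :
    5 * ∑ j ∈ Finset.Icc 1 n,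
        (-F (m - 3)) ^ (n - j) * F (m + 2) ^ j *
          (G ((j : ℤ) + t - 1) * G ((j : ℤ) + t) * G ((j : ℤ) + t + 1) * G ((j : ℤ) + t + 2) *
            G ((j : ℤ) + t + m)) =
      F (m + 2) ^ (n + 1) * G ((n : ℤ) + t + 1) ^ 5 -
        (-F (m - 3)) ^ n * F (m + 2) * G (t + 1) ^ 5 -
        (G 1 ^ 2 - G 0 * G 2) ^ 2 *
          (F (m + 2) ^ (n + 1) * G ((n : ℤ) + t + 1) - (-F (m - 3)) ^ n * F (m + 2) * G (t + 1)) := by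
  have hcassini₀ : (G 1 ^ 2 - G 0 * G 2) ^ 2 = cassini G 0 ^ 2 := by norm_num [cassini]
  set H : ℤ → ℤ := fun s => G s ^ 5 - cassini G 0 ^ 2 * G s
  have key (s : ℤ) :
      5 * (G (s - 1) * G s * G (s + 1) * G (s + 2) * G (s + m)) =
        F (m + 2) * H (s + 1) - (-F (m - 3)) * H s := by
    rw [IsGibonacci.five_mul_prod_eq hF0 hF1 hF hG, IsGibonacci.cassini_sq hG]
    ring
  rw [mul_sum, hcassini₀]
  calc _ = ∑ j ∈ Icc 1 n, (-F (m - 3)) ^ (n - j) * F (m + 2) ^ j *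
          (5 * (G ((j : ℤ) + t - 1) * G ((j : ℤ) + t) * G ((j : ℤ) + t + 1) *
            G ((j : ℤ) + t + 2) * G ((j : ℤ) + t + m))) :=
        sum_congr rfl fun j _ => by ring
    _ = F (m + 2) ^ (n + 1) * H (((n + 1 : ℕ) : ℤ) + t) -
          (-F (m - 3)) ^ n * F (m + 2) * H (((1 : ℕ) : ℤ) + t) :=
        sum_Icc_pow_mul_pow_mul_telescope _ _ (fun j => H (j + t)) _
          (fun j => by rw [key]; push_cast; rw [add_right_comm]) n
    _ = _ := by
      rw [Nat.cast_succ, add_right_comm, Nat.cast_one, add_comm 1 t]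
      ring
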